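/- Let ã, r̃, q̃ be real numbers with 0 < ã < 1, r̃ > 1, ã/r̃ < q̃, and q̃ ≤ 1/(r̃+1). For p ∈ (0,1], set r*(p) = max( ã/(p·q̃), r̃ ). Define ε(p) = log( 2p(1−q̃) / ( √((1−p)² + 4p(1−q̃)(1/r*(p) − p·q̃)) − (1−p) ) ) for p ∈ (0,1] with p·q̃ < 1/r*(p). Then ε(p) ≥ (1/2)·log( (1−q̃) / (1/r̃ − q̃) ) for every p ∈ (0,1] with p·q̃ < 1/r*(p), and ε(1) = (1/2)·log( (1−q̃) / (1/r̃ − q̃) ). -/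

import Mathlib

/-- The privacy-budget threshold `ε_i(p, q̃)` (for `q̃ < 1`) under the risk profile
`r*(p,q̃) = max{ã/(p·q̃), r̃}`. -/
noncomputable def epsThreshold17 (a r q p : ℝ) : ℝ :=
  Real.log (2 * p * (1 - q) /
    (Real.sqrt ((1 - p) ^ 2 + 4 * p * (1 - q) * (1 / max (a / (p * q)) r - p * q)) - (1 - p)))

set_option maxHeartbeats 1000000 in
theorem stmt_17 (a r q : ℝ) (ha0 : 0 < a) (ha1 : a < 1) (hr : 1 < r)
    (hq1 : a / r < q) (hq2 : q ≤ 1 / (r + 1)) :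
    (∀ p : ℝ, 0 < p → p ≤ 1 → p * q < 1 / max (a / (p * q)) r →
      (1 / 2) * Real.log ((1 - q) / (1 / r - q)) ≤ epsThreshold17 a r q p) ∧
    epsThreshold17 a r q 1 = (1 / 2) * Real.log ((1 - q) / (1 / r - q)) := by
  have hr0 : (0:ℝ) < r := by linarith
  have hq0 : 0 < q := lt_trans (div_pos ha0 hr0) hq1
  have hqlt : q < 1 := lt_of_le_of_lt hq2 (by rw [div_lt_one (by linarith)]; linarith)
  have h1q : 0 < 1 - q := by linarith
  have ht : 0 < 1/r - q := by
    have h : q < 1/r := lt_of_le_of_lt hq2 (by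
      rw [div_lt_div_iff₀ (by linarith) hr0]; nlinarith)
    linarith
  set M := Real.sqrt ((1-q)/(1/r - q)) with hMdef
  have hM2 : M^2 = (1-q)/(1/r-q) := Real.sq_sqrt (by positivity)
  have hM0 : 0 < M := Real.sqrt_pos.2 (by positivity)
  have hlogM : (1/2) * Real.log ((1-q)/(1/r - q)) = Real.log M := by
    rw [hMdef, Real.log_sqrt (by positivity)]; ring
  clear_value M
  have hM2' : M^2 * (1/r - q) = 1 - q := by rw [hM2, div_mul_cancel₀ _ ht.ne']
  have hMr : M ≤ r := by
    have hr2 : r^2 * (1/r - q) = r - r^2*q := by field_simp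
    have hMr2 : M^2 ≤ r^2 := by
      rw [hM2, div_le_iff₀ ht, hr2]
      have hqr : q * (r+1) ≤ 1 := by
        have := (le_div_iff₀ (by linarith : (0:ℝ) < r + 1)).1 hq2
        linarith
      nlinarith [mul_nonneg (by linarith : (0:ℝ) ≤ r - 1)
        (by linarith : (0:ℝ) ≤ 1 - q*(r+1))]
    nlinarith
  constructor
  · intro p hp0 hp1 hpr
    rw [epsThreshold17]
    set rs := max (a/(p*q)) r with hrs
    have hrsr : r ≤ rs := le_max_right _ _
    clear_value rs
    have hrs0 : (0:ℝ) < rs := lt_of_lt_of_le hr0 hrsr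
    have hc : 0 < 1/rs - p*q := by linarith
    have hcle : 1/rs - p*q ≤ 1/r - p*q := by
      have : 1/rs ≤ 1/r := one_div_le_one_div_of_le hr0 hrsr
      linarith
    have hp1' : (0:ℝ) ≤ 1 - p := by linarith
    have h4 : 0 < 4*p*(1-q)*(1/rs - p*q) := mul_pos (by positivity) hc
    set A := (1 - p)^2 + 4*p*(1-q)*(1/rs - p*q) with hA
    have hA0 : 0 ≤ A := by rw [hA]; nlinarith [sq_nonneg (1-p)]
    have hS2 : (Real.sqrt A)^2 = A := Real.sq_sqrt hA0
    set S := Real.sqrt A with hSdef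
    have hSnn : 0 ≤ S := Real.sqrt_nonneg A
    clear_value S A
    have hS2' : S^2 = (1-p)^2 + 4*p*(1-q)*(1/rs - p*q) := by rw [hS2, hA]
    have hSpos : 1 - p < S := by nlinarith [hS2', h4, sq_nonneg (1-p)]
    have hD : 0 < S - (1-p) := by linarith
    -- key inequality
    have hMu : M * (1/r) ≤ 1 := by
      rw [mul_one_div, div_le_one hr0]; exact hMr
    have h1 : (1/rs - p*q)*M^2 ≤ (1/r - p*q)*M^2 :=
      mul_le_mul_of_nonneg_right hcle (sq_nonneg M)
    have h2 : p * (M^2 * (1/r - q)) = p * (1-q) := by rw [hM2']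
    have h3 : 0 ≤ (1 - M*(1/r)) * (M*(1-p)) :=
      mul_nonneg (by linarith) (mul_nonneg hM0.le (by linarith))
    have hkey : (1/rs - p*q) * M^2 ≤ p*(1-q) + M*(1-p) := by nlinarith [h1, h2, h3]
    have hSM : 2*(1/rs - p*q)*M - (1-p) ≤ S := by
      rcases le_or_gt (2*(1/rs - p*q)*M) (1-p) with h | h
      · linarith
      · have hsq : (2*(1/rs - p*q)*M - (1-p))^2 ≤ S^2 := by
          rw [hS2']
          nlinarith [mul_le_mul_of_nonneg_left hkey hc.le]
        nlinarith [hsq]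
    have hfrac : M ≤ (S + (1-p)) / (2*(1/rs - p*q)) := by
      rw [le_div_iff₀ (by linarith : (0:ℝ) < 2*(1/rs - p*q))]
      nlinarith [hSM]
    have hED : 2*p*(1-q) / (S - (1-p)) = (S + (1-p)) / (2*(1/rs - p*q)) := by
      rw [div_eq_div_iff hD.ne' (by linarith : (0:ℝ) < 2*(1/rs - p*q)).ne']
      linear_combination -hS2'
    calc (1/2) * Real.log ((1-q)/(1/r - q)) = Real.log M := hlogM
      _ ≤ Real.log ((S + (1-p)) / (2*(1/rs - p*q))) := Real.log_le_log hM0 hfrac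
      _ = Real.log (2 * p * (1 - q) / (S - (1 - p))) := by rw [← hED]
  · have hmax : max (a/(1*q)) r = r := by
      apply max_eq_right
      rw [one_mul, div_le_iff₀ hq0]
      have := (div_lt_iff₀ hr0).1 hq1
      nlinarith
    have hZ0 : 0 < Real.sqrt ((1-q)*(1/r-q)) := Real.sqrt_pos.2 (by positivity)
    have hsqrt4 : Real.sqrt (4*((1-q)*(1/r - q))) = 2 * Real.sqrt ((1-q)*(1/r-q)) := by
      rw [show (4:ℝ) = 2^2 by norm_num, Real.sqrt_mul (by positivity),
        Real.sqrt_sq (by norm_num)]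
    have hfin : (1-q)/Real.sqrt ((1-q)*(1/r-q)) = M := by
      rw [hMdef, div_eq_iff hZ0.ne', ← Real.sqrt_mul (by positivity : (0:ℝ) ≤ (1-q)/(1/r-q)),
        show (1-q)/(1/r-q) * ((1-q)*(1/r-q)) = (1-q)^2 from by
          rw [div_mul_eq_mul_div, mul_div_assoc, mul_div_assoc, div_self ht.ne',
            mul_one, pow_two],
        Real.sqrt_sq h1q.le]
    rw [epsThreshold17]
    have harg : ((1:ℝ) - 1) ^ 2 + 4 * 1 * (1 - q) * (1 / max (a / (1 * q)) r - 1 * q)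
        = 4*((1-q)*(1/r - q)) := by rw [hmax]; ring
    rw [harg, hsqrt4]
    rw [show (2 * 1 * (1 - q) / (2 * Real.sqrt ((1-q)*(1/r-q)) - ((1:ℝ) - 1)))
      = (1-q)/Real.sqrt ((1-q)*(1/r-q)) by rw [sub_self, sub_zero]; ring_nf]
    rw [hfin, hlogM]
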